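/- arXiv:2304.01368 — 2 statements merged into one kernel-verified Lean document; each statement's English description precedes it below -/
import Mathlib

section
/- Every finite simple graph G on n ≥ 1 vertices satisfies 𝓈(G) ≤ n·c, where c is the maximum of the rational numbers |V(H)|/α(H) taken over all nonempty subgraphs H of G and α(H) is the independence number of H. -/
/-! Definitions for the slow coloring game (sum-color cost), paintability,
connectivity and auxiliary graphs. -/

variable {V : Type*}

/-- `D` is a maximal independent subset of `M` with respect to `G`:
`D ⊆ M`, `D` is independent in `G`, and every vertex of `M \ D` has a neighbor in `D`. -/
def SimpleGraph.MaxIndepSubset (G : SimpleGraph V) (M D : Finset V) : Prop :=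
  D ⊆ M ∧ (∀ u ∈ D, ∀ v ∈ D, ¬ G.Adj u v) ∧ ∀ v ∈ M, v ∉ D → ∃ u ∈ D, G.Adj u v

/-- Fueled recursion computing the slow coloring number of the subgraph of `G`
induced on the vertex set `A`.  In each round Lister marks a nonempty `M ⊆ A`,
scoring `|M|`, and Painter deletes a maximal independent subset `D` of `M`
(such a `D` is necessarily nonempty, so the game ends within `A.card` rounds;
hence the value is correct whenever the fuel is at least `A.card`). -/
noncomputable def SimpleGraph.slowAux [DecidableEq V] (G : SimpleGraph V) :
    ℕ → Finset V → ℕ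
  | 0, _ => 0
  | fuel + 1, A =>
    (A.powerset.filter fun M => M.Nonempty).sup fun M =>
      M.card + sInf {m | ∃ D : Finset V, G.MaxIndepSubset M D ∧ m = G.slowAux fuel (A \ D)}

/-- The slow coloring number (sum-color cost) `𝓈(G)` of a finite simple graph `G`. -/
noncomputable def SimpleGraph.sumColorCost [Fintype V] [DecidableEq V]
    (G : SimpleGraph V) : ℕ :=
  G.slowAux (Fintype.card V) Finset.univ

/-- `G` is `m`-connected: it has more than `m` vertices and deleting any set of
fewer than `m` vertices leaves a connected graph. -/
def SimpleGraph.MConnected [Fintype V] [DecidableEq V] (G : SimpleGraph V) (m : ℕ) : Prop :=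
  m < Fintype.card V ∧
    ∀ S : Finset V, S.card < m →
      (G.induce ((Finset.univ \ S : Finset V) : Set V)).Connected

/-- The independence number `α(G)`: the maximum size of a set of pairwise
nonadjacent vertices. -/
noncomputable def SimpleGraph.indepNumber (G : SimpleGraph V) : ℕ :=
  sSup {n | ∃ s : Set V, (∀ u ∈ s, ∀ v ∈ s, ¬ G.Adj u v) ∧ s.ncard = n}

/-- Fueled recursion for the `f`-painting game of `G` restricted to the vertex
set `A`: the empty graph is `f`-paintable, and a nonempty graph is `f`-paintable
iff every vertex has at least one token and, for every nonempty marked set `M`,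
Painter can delete some maximal independent subset `D` of `M` so that the rest
is paintable after each vertex of `M \ D` loses a token. -/
def SimpleGraph.paintAux [DecidableEq V] (G : SimpleGraph V) :
    ℕ → Finset V → (V → ℕ) → Prop
  | 0, A, _ => A = ∅
  | fuel + 1, A, f =>
    A = ∅ ∨ ((∀ v ∈ A, 1 ≤ f v) ∧
      ∀ M ⊆ A, M.Nonempty → ∃ D : Finset V, G.MaxIndepSubset M D ∧
        G.paintAux fuel (A \ D) (fun v => if v ∈ M \ D then f v - 1 else f v))

/-- `G` is `f`-paintable. -/
def SimpleGraph.Paintable [Fintype V] [DecidableEq V] (G : SimpleGraph V) (f : V → ℕ) : Prop :=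
  G.paintAux (Fintype.card V) Finset.univ f

/-- The sum-paintability `χ_SP(G)`: the least total number of tokens `∑ v, f v`
over functions `f` for which `G` is `f`-paintable. -/
noncomputable def SimpleGraph.sumPaintability [Fintype V] [DecidableEq V]
    (G : SimpleGraph V) : ℕ :=
  sInf {s | ∃ f : V → ℕ, G.Paintable f ∧ s = ∑ v, f v}

/-- The triangular prism graph on vertices `0,…,5` (a triangle `0,1,2`, a
triangle `3,4,5`, and the matching `03, 14, 25`). -/
def prismGraph : SimpleGraph (Fin 6) :=
  SimpleGraph.fromRel fun u v =>
    ((u : ℕ), (v : ℕ)) ∈ [(0,1), (1,2), (0,2), (3,4), (4,5), (3,5), (0,3), (1,4), (2,5)]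

/-- The star `K_{1,n-1}` on `n` vertices, with center `0`. -/
def starGraph (n : ℕ) : SimpleGraph (Fin n) :=
  SimpleGraph.fromRel fun u _ => (u : ℕ) = 0

/-- Existence of a maximum-size (hence maximal) independent subset of `M`. -/
lemma exists_maxIndepSubset {V : Type*} [DecidableEq V] (G : SimpleGraph V) (M : Finset V) :
    ∃ D : Finset V, G.MaxIndepSubset M D ∧
      ∀ E ⊆ M, (∀ u ∈ E, ∀ v ∈ E, ¬ G.Adj u v) → E.card ≤ D.card := by
  classical
  have hSne : (M.powerset.filter (fun E => ∀ u ∈ E, ∀ v ∈ E, ¬ G.Adj u v)).Nonempty :=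
    ⟨∅, by simp⟩
  obtain ⟨D, hDS, hmax⟩ :=
    (M.powerset.filter (fun E => ∀ u ∈ E, ∀ v ∈ E, ¬ G.Adj u v)).exists_max_image
      Finset.card hSne
  simp only [Finset.mem_filter, Finset.mem_powerset] at hDS
  obtain ⟨hDM, hDind⟩ := hDS
  have hmax' : ∀ E ⊆ M, (∀ u ∈ E, ∀ v ∈ E, ¬ G.Adj u v) → E.card ≤ D.card := by
    intro E hE hEind
    exact hmax E (by simp only [Finset.mem_filter, Finset.mem_powerset]; exact ⟨hE, hEind⟩)
  refine ⟨D, ⟨hDM, hDind, ?_⟩, hmax'⟩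
  intro v hvM hvD
  by_contra hno
  push_neg at hno
  have hind : ∀ u ∈ insert v D, ∀ w ∈ insert v D, ¬ G.Adj u w := by
    intro u hu w hw hadj
    rcases Finset.mem_insert.mp hu with hu | hu
    · rcases Finset.mem_insert.mp hw with hw | hw
      · rw [hu, hw] at hadj; exact G.loopless.irrefl v hadj
      · rw [hu] at hadj; exact hno w hw hadj.symm
    · rcases Finset.mem_insert.mp hw with hw | hw
      · rw [hw] at hadj; exact hno u hu hadj
      · exact hDind u hu w hw hadj
  have := hmax' (insert v D) (Finset.insert_subset hvM hDM) hind
  rw [Finset.card_insert_of_notMem hvD] at this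
  omega

lemma slowAux_le_aux {V : Type*} [Fintype V] [DecidableEq V] (G : SimpleGraph V) (c : ℚ)
    (hub : ∀ q ∈ {q : ℚ | ∃ H : G.Subgraph, H.verts.Nonempty ∧
        q = (H.verts.ncard : ℚ) / (H.coe.indepNumber : ℚ)}, q ≤ c)
    (hc0 : 0 ≤ c) :
    ∀ fuel (A : Finset V), (G.slowAux fuel A : ℚ) ≤ A.card * c := by
  intro fuel
  induction fuel with
  | zero =>
    intro A
    simp only [SimpleGraph.slowAux, Nat.cast_zero]
    positivity
  | succ fuel ih =>
    intro A
    rw [SimpleGraph.slowAux]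
    rcases (A.powerset.filter (fun M => M.Nonempty)).eq_empty_or_nonempty with hTe | hTne
    · rw [hTe]
      simp only [Finset.sup_empty, Nat.cast_zero]
      positivity
    · obtain ⟨M, hMT, hsup⟩ := (A.powerset.filter (fun M => M.Nonempty)).exists_mem_eq_sup
        hTne (fun M => M.card + sInf {m | ∃ D : Finset V, G.MaxIndepSubset M D ∧
          m = G.slowAux fuel (A \ D)})
      rw [hsup]
      simp only [Finset.mem_filter, Finset.mem_powerset] at hMT
      obtain ⟨hMA, hMne⟩ := hMT
      obtain ⟨D, hD, hDmax⟩ := exists_maxIndepSubset G M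
      have hDM : D ⊆ M := hD.1
      have hDA : D ⊆ A := hDM.trans hMA
      -- The subgraph induced on M
      set H : G.Subgraph := (⊤ : G.Subgraph).induce ↑M with hH
      have hHverts : H.verts = (↑M : Set V) := rfl
      have hHne : H.verts.Nonempty := by
        rw [hHverts]; exact_mod_cast hMne
      have hHncard : H.verts.ncard = M.card := by
        rw [hHverts, Set.ncard_coe_finset]
      have hadj : ∀ (x y : H.verts), H.coe.Adj x y ↔ G.Adj (x : V) (y : V) := by
        intro x y
        simp only [SimpleGraph.Subgraph.coe_adj, hH, SimpleGraph.Subgraph.induce_adj,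
          SimpleGraph.Subgraph.top_adj]
        constructor
        · exact fun h => h.2.2
        · intro h
          exact ⟨by exact_mod_cast x.2, by exact_mod_cast y.2, h⟩
      set α := H.coe.indepNumber with hα
      have hbdd : BddAbove {n | ∃ s : Set H.verts,
          (∀ u ∈ s, ∀ v ∈ s, ¬ H.coe.Adj u v) ∧ s.ncard = n} := by
        refine ⟨Nat.card H.verts, ?_⟩
        rintro n ⟨s, _, rfl⟩
        calc s.ncard ≤ (Set.univ : Set H.verts).ncard :=
              Set.ncard_le_ncard (Set.subset_univ s) Set.finite_univ
          _ = Nat.card H.verts := Set.ncard_univ _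
      have hα1 : 1 ≤ α := by
        obtain ⟨v, hv⟩ := hMne
        have hvH : v ∈ H.verts := by exact_mod_cast hv
        rw [hα, SimpleGraph.indepNumber]
        apply le_csSup hbdd
        refine ⟨{⟨v, hvH⟩}, ?_, by simp⟩
        intro u hu w hw
        rw [Set.mem_singleton_iff] at hu hw
        subst hu; subst hw
        exact H.coe.loopless.irrefl _
      have hαD : α ≤ D.card := by
        rw [hα, SimpleGraph.indepNumber]
        have hne0 : (0 : ℕ) ∈ {n | ∃ s : Set H.verts,
            (∀ u ∈ s, ∀ v ∈ s, ¬ H.coe.Adj u v) ∧ s.ncard = n} := ⟨∅, by simp, by simp⟩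
        apply csSup_le ⟨0, hne0⟩
        rintro n ⟨s, hsind, rfl⟩
        classical
        have hsfin : s.Finite := Set.toFinite s
        set E := hsfin.toFinset.image (Subtype.val) with hE
        have hEM : E ⊆ M := by
          intro x hx
          rw [hE] at hx
          obtain ⟨y, _, rfl⟩ := Finset.mem_image.mp hx
          exact Finset.mem_coe.mp y.2
        have hEind : ∀ u ∈ E, ∀ v ∈ E, ¬ G.Adj u v := by
          intro u hu v hv hG
          rw [hE] at hu hv
          obtain ⟨yu, hyu, rfl⟩ := Finset.mem_image.mp hu
          obtain ⟨yv, hyv, rfl⟩ := Finset.mem_image.mp hv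
          rw [Set.Finite.mem_toFinset] at hyu hyv
          exact hsind yu hyu yv hyv ((hadj yu yv).mpr hG)
        have hcard : E.card = s.ncard := by
          rw [hE, Finset.card_image_of_injective _ Subtype.val_injective,
            Set.ncard_eq_toFinset_card s hsfin]
        rw [← hcard]
        exact hDmax E hEM hEind
      have hαpos : (0 : ℚ) < (α : ℚ) := by exact_mod_cast hα1
      have hqmem : ((M.card : ℚ) / (α : ℚ)) ∈ {q : ℚ | ∃ H : G.Subgraph, H.verts.Nonempty ∧
          q = (H.verts.ncard : ℚ) / (H.coe.indepNumber : ℚ)} :=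
        ⟨H, hHne, by rw [hHncard]⟩
      have hMc : (M.card : ℚ) ≤ c * (α : ℚ) := by
        have := hub _ hqmem
        rwa [div_le_iff₀ hαpos] at this
      have hMcD : (M.card : ℚ) ≤ c * (D.card : ℚ) := by
        refine hMc.trans (mul_le_mul_of_nonneg_left ?_ hc0)
        exact_mod_cast hαD
      -- bound the inf
      have hinf : sInf {m | ∃ D' : Finset V, G.MaxIndepSubset M D' ∧
          m = G.slowAux fuel (A \ D')} ≤ G.slowAux fuel (A \ D) :=
        Nat.sInf_le ⟨D, hD, rfl⟩
      have hrest : (G.slowAux fuel (A \ D) : ℚ) ≤ ((A.card : ℚ) - (D.card : ℚ)) * c := by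
        have := ih (A \ D)
        rw [Finset.card_sdiff_of_subset hDA] at this
        rwa [Nat.cast_sub (Finset.card_le_card hDA)] at this
      push_cast
      calc (M.card : ℚ) + ((sInf {m | ∃ D' : Finset V, G.MaxIndepSubset M D' ∧
              m = G.slowAux fuel (A \ D')} : ℕ) : ℚ)
          ≤ c * (D.card : ℚ) + (G.slowAux fuel (A \ D) : ℚ) := by
            have : ((sInf {m | ∃ D' : Finset V, G.MaxIndepSubset M D' ∧
                m = G.slowAux fuel (A \ D')} : ℕ) : ℚ) ≤ (G.slowAux fuel (A \ D) : ℚ) := by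
              exact_mod_cast hinf
            linarith [hMcD]
        _ ≤ c * (D.card : ℚ) + ((A.card : ℚ) - (D.card : ℚ)) * c := by gcongr
        _ = A.card * c := by ring

/-- Every graph `G` on `n ≥ 1` vertices satisfies `𝓈(G) ≤ n·c`, where `c` is
the maximum of `|V(H)|/α(H)` over all nonempty subgraphs `H` of `G`. -/
theorem slow_coloring_upper_bound {V : Type*} [Fintype V] [DecidableEq V]
    (G : SimpleGraph V) (hn : 1 ≤ Fintype.card V) (c : ℚ)
    (hc : IsGreatest {q : ℚ | ∃ H : G.Subgraph, H.verts.Nonempty ∧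
        q = (H.verts.ncard : ℚ) / (H.coe.indepNumber : ℚ)} c) :
    (G.sumColorCost : ℚ) ≤ (Fintype.card V : ℚ) * c := by
  have hc0 : 0 ≤ c := by
    obtain ⟨H, _, hceq⟩ := hc.1
    rw [hceq]
    positivity
  have := slowAux_le_aux G c hc.2 hc0 (Fintype.card V) Finset.univ
  rwa [Finset.card_univ] at this
end

section
/- If a finite simple graph G is the disjoint union of graphs G₁ and G₂ (no edges between them), then 𝓈(G) ≥ 𝓈(G₁) + 𝓈(G₂). -/
/-! Definitions for the slow coloring game (sum-color cost), paintability,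
connectivity and auxiliary graphs. -/

variable {V : Type*}

section Lemmas

open Finset

variable {V : Type*} [DecidableEq V]

lemma exists_maxIndepSubset_s14 (G : SimpleGraph V) (M : Finset V) :
    ∃ D, G.MaxIndepSubset M D := by
  classical
  have hfin : {D : Finset V | D ⊆ M ∧ ∀ u ∈ D, ∀ v ∈ D, ¬ G.Adj u v}.Finite := by
    apply Set.Finite.subset (M.powerset : Finset (Finset V)).finite_toSet
    intro D hD
    simpa [Finset.mem_powerset] using hD.1
  obtain ⟨D, hD, hmax'⟩ := hfin.exists_maximalFor id _ ⟨∅, by simp⟩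
  have hmax : ∀ E ∈ {D : Finset V | D ⊆ M ∧ ∀ u ∈ D, ∀ v ∈ D, ¬ G.Adj u v}, id D ≤ id E → id D = id E :=
    fun E hE h => le_antisymm h (hmax' hE h)
  refine ⟨D, hD.1, hD.2, fun v hv hvD => ?_⟩
  by_contra hno
  push_neg at hno
  have hind : ∀ u ∈ insert v D, ∀ w ∈ insert v D, ¬ G.Adj u w := by
    intro u hu w hw h
    rcases Finset.mem_insert.1 hu with h1 | h1 <;> rcases Finset.mem_insert.1 hw with h2 | h2
    · rw [h1, h2] at h; exact G.loopless.irrefl v h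
    · rw [h1] at h; exact hno w h2 h.symm
    · rw [h2] at h; exact hno u h1 h
    · exact hD.2 u h1 w h2 h
  have : D = insert v D :=
    hmax _ ⟨Finset.insert_subset hv hD.1, hind⟩ (Finset.subset_insert v D)
  exact hvD (this ▸ Finset.mem_insert_self v D)

lemma sInf_nonempty_of_exists (G : SimpleGraph V) (M : Finset V) (e : Finset V → ℕ) :
    {m | ∃ D : Finset V, G.MaxIndepSubset M D ∧ m = e D}.Nonempty := by
  obtain ⟨D, hD⟩ := exists_maxIndepSubset_s14 G M
  exact ⟨e D, D, hD, rfl⟩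

lemma slowAux_mono (G : SimpleGraph V) :
    ∀ g f : ℕ, f ≤ g → ∀ S T : Finset V, S ⊆ T → G.slowAux f S ≤ G.slowAux g T := by
  intro g
  induction g with
  | zero =>
    intro f hf S T _
    obtain rfl : f = 0 := Nat.le_zero.1 hf
    simp [SimpleGraph.slowAux]
  | succ g ih =>
    intro f hf S T hST
    match f with
    | 0 => simp [SimpleGraph.slowAux]
    | f + 1 =>
      rw [SimpleGraph.slowAux, SimpleGraph.slowAux]
      apply Finset.sup_le
      intro M hM
      simp only [Finset.mem_filter, Finset.mem_powerset] at hM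
      have hMT : M ∈ T.powerset.filter fun M => M.Nonempty := by
        simp only [Finset.mem_filter, Finset.mem_powerset]
        exact ⟨hM.1.trans hST, hM.2⟩
      refine le_trans ?_ (Finset.le_sup hMT)
      apply Nat.add_le_add_left
      refine le_csInf (sInf_nonempty_of_exists G M _) ?_
      rintro m ⟨D, hD, rfl⟩
      refine le_trans (Nat.sInf_le ⟨D, hD, rfl⟩) ?_
      exact ih f (Nat.succ_le_succ_iff.1 hf) _ _
        (Finset.sdiff_subset_sdiff hST le_rfl)

lemma slowAux_superadd (G : SimpleGraph V) (T : Finset V) (f₂ : ℕ) :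
    ∀ f₁ : ℕ, ∀ S : Finset V, Disjoint S T →
      G.slowAux f₁ S + G.slowAux f₂ T ≤ G.slowAux (f₁ + f₂) (S ∪ T) := by
  intro f₁
  induction f₁ with
  | zero =>
    intro S _
    simpa [SimpleGraph.slowAux] using
      slowAux_mono G f₂ f₂ le_rfl T (S ∪ T) Finset.subset_union_right
  | succ f₁ ih =>
    intro S hdisj
    have hbase : G.slowAux f₂ T ≤ G.slowAux (f₁ + 1 + f₂) (S ∪ T) :=
      slowAux_mono G (f₁ + 1 + f₂) f₂ (by omega) T (S ∪ T) Finset.subset_union_right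
    rw [SimpleGraph.slowAux]
    rcases Finset.eq_empty_or_nonempty (S.powerset.filter fun M => M.Nonempty) with he | hne
    · rw [he]
      simpa using hbase
    · obtain ⟨M, hM, hsup⟩ := Finset.exists_mem_eq_sup _ hne
        (fun M => M.card + sInf {m | ∃ D : Finset V, G.MaxIndepSubset M D ∧
          m = G.slowAux f₁ (S \ D)})
      rw [hsup]
      simp only [Finset.mem_filter, Finset.mem_powerset] at hM
      have h1 : f₁ + 1 + f₂ = (f₁ + f₂) + 1 := by omega
      rw [h1, SimpleGraph.slowAux]
      have hMmem : M ∈ (S ∪ T).powerset.filter fun M => M.Nonempty := by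
        simp only [Finset.mem_filter, Finset.mem_powerset]
        exact ⟨hM.1.trans Finset.subset_union_left, hM.2⟩
      refine le_trans ?_ (Finset.le_sup hMmem)
      rw [add_assoc]
      apply Nat.add_le_add_left
      refine le_csInf (sInf_nonempty_of_exists G M _) ?_
      rintro m ⟨D, hD, rfl⟩
      have hDT : Disjoint D T := Finset.disjoint_of_subset_left (hD.1.trans hM.1) hdisj
      have hsd : (S ∪ T) \ D = (S \ D) ∪ T := by
        rw [Finset.union_sdiff_distrib, Finset.sdiff_eq_self_of_disjoint hDT.symm]
      rw [hsd]
      refine le_trans ?_ (ih (S \ D) (Finset.disjoint_of_subset_left Finset.sdiff_subset hdisj))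
      have hm : G.slowAux f₁ (S \ D) ∈
          {m | ∃ D : Finset V, G.MaxIndepSubset M D ∧ m = G.slowAux f₁ (S \ D)} :=
        ⟨D, hD, rfl⟩
      exact Nat.add_le_add_right (Nat.sInf_le hm) _

lemma maxIndep_map (G : SimpleGraph V) (A : Set V) (M D : Finset A) :
    (G.induce A).MaxIndepSubset M D ↔
      G.MaxIndepSubset (M.map (Function.Embedding.subtype _))
        (D.map (Function.Embedding.subtype _)) := by
  constructor
  · rintro ⟨h1, h2, h3⟩
    refine ⟨Finset.map_subset_map.2 h1, ?_, ?_⟩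
    · rintro u hu v hv
      simp only [Finset.mem_map, Function.Embedding.coe_subtype] at hu hv
      obtain ⟨u', hu', rfl⟩ := hu
      obtain ⟨v', hv', rfl⟩ := hv
      exact h2 u' hu' v' hv'
    · rintro v hv hvD
      simp only [Finset.mem_map, Function.Embedding.coe_subtype] at hv
      obtain ⟨v', hv', rfl⟩ := hv
      have hv'D : v' ∉ D := fun h => hvD (Finset.mem_map_of_mem _ h)
      obtain ⟨u, hu, hadj⟩ := h3 v' hv' hv'D
      exact ⟨u, Finset.mem_map_of_mem _ hu, hadj⟩
  · rintro ⟨h1, h2, h3⟩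
    refine ⟨?_, ?_, ?_⟩
    · intro x hx
      exact (Finset.mem_map' _).1 (h1 (Finset.mem_map_of_mem _ hx))
    · intro u hu v hv
      exact h2 _ (Finset.mem_map_of_mem _ hu) _ (Finset.mem_map_of_mem _ hv)
    · intro v hv hvD
      obtain ⟨u, hu, hadj⟩ := h3 _ (Finset.mem_map_of_mem _ hv)
        (fun h => hvD ((Finset.mem_map' _).1 h))
      simp only [Finset.mem_map, Function.Embedding.coe_subtype] at hu
      obtain ⟨u', hu', rfl⟩ := hu
      exact ⟨u', hu', hadj⟩

lemma finsetMapSdiff {α β : Type*} [DecidableEq α] [DecidableEq β] (f : α ↪ β) (s t : Finset α) :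
    (s \ t).map f = s.map f \ t.map f := by
  simp only [Finset.map_eq_image]
  exact Finset.image_sdiff s t f.injective

lemma slowAux_induce (G : SimpleGraph V) (A : Set V) [DecidableEq A] :
    ∀ f : ℕ, ∀ S : Finset A,
      (G.induce A).slowAux f S = G.slowAux f (S.map (Function.Embedding.subtype _)) := by
  intro f
  induction f with
  | zero => intro S; simp [SimpleGraph.slowAux]
  | succ f ih =>
    intro S
    rw [SimpleGraph.slowAux, SimpleGraph.slowAux]
    apply le_antisymm
    · apply Finset.sup_le
      intro M hM
      simp only [Finset.mem_filter, Finset.mem_powerset] at hM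
      have hMmem : M.map (Function.Embedding.subtype _) ∈
          (S.map (Function.Embedding.subtype _)).powerset.filter fun M => M.Nonempty := by
        simp only [Finset.mem_filter, Finset.mem_powerset]
        exact ⟨Finset.map_subset_map.2 hM.1, Finset.Nonempty.map hM.2⟩
      refine le_trans ?_ (Finset.le_sup hMmem)
      rw [Finset.card_map]
      apply Nat.add_le_add_left
      refine le_csInf (sInf_nonempty_of_exists G (M.map (Function.Embedding.subtype _)) _) ?_
      rintro m ⟨D', hD', rfl⟩
      obtain ⟨D, _, rfl⟩ := Finset.subset_map_iff.1 hD'.1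
      have : (G.induce A).MaxIndepSubset M D := (maxIndep_map G A M D).2 hD'
      refine le_trans (Nat.sInf_le ⟨D, this, rfl⟩) ?_
      rw [ih, finsetMapSdiff]
    · apply Finset.sup_le
      intro M' hM'
      simp only [Finset.mem_filter, Finset.mem_powerset] at hM'
      obtain ⟨M, hMS, rfl⟩ := Finset.subset_map_iff.1 hM'.1
      have hMmem : M ∈ S.powerset.filter fun M => M.Nonempty := by
        simp only [Finset.mem_filter, Finset.mem_powerset]
        refine ⟨hMS, ?_⟩
        obtain ⟨x, hx⟩ := hM'.2
        simp only [Finset.mem_map] at hx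
        obtain ⟨y, hy, _⟩ := hx
        exact ⟨y, hy⟩
      refine le_trans ?_ (Finset.le_sup hMmem)
      rw [Finset.card_map]
      apply Nat.add_le_add_left
      refine le_csInf (sInf_nonempty_of_exists (G.induce A) M _) ?_
      rintro m ⟨D, hD, rfl⟩
      refine le_trans (Nat.sInf_le ⟨D.map (Function.Embedding.subtype _),
        (maxIndep_map G A M D).1 hD, rfl⟩) ?_
      rw [ih, finsetMapSdiff]

end Lemmas

/-- If `G` is the disjoint union of the induced subgraphs on `A` and `B`
(i.e. `A, B` partition `V(G)` and there are no edges between them), then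
`𝓈(G) ≥ 𝓈(G[A]) + 𝓈(G[B])`. -/
theorem slow_coloring_disjoint_union {V : Type*} [Fintype V] [DecidableEq V]
    (G : SimpleGraph V) (A B : Finset V)
    (hunion : A ∪ B = Finset.univ) (hdisj : Disjoint A B)
    (hsep : ∀ a ∈ A, ∀ b ∈ B, ¬ G.Adj a b) :
    (G.induce (A : Set V)).sumColorCost + (G.induce (B : Set V)).sumColorCost ≤
      G.sumColorCost := by
  classical
  have key : ∀ C : Finset V,
      (Finset.univ : Finset ↥(C : Set V)).map (Function.Embedding.subtype _) = C := by
    intro C; ext v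
    simp only [Finset.mem_map, Finset.mem_univ, Function.Embedding.coe_subtype]
    constructor
    · rintro ⟨⟨a, ha⟩, -, rfl⟩; exact ha
    · intro hv; exact ⟨⟨v, hv⟩, trivial, rfl⟩
  have hcard : ∀ C : Finset V, Fintype.card ↥(C : Set V) = C.card := by
    intro C
    conv_rhs => rw [← key C]
    rw [Finset.card_map, Finset.card_univ]
  unfold SimpleGraph.sumColorCost
  rw [slowAux_induce, slowAux_induce, key, key, hcard A, hcard B]
  have hAB : A.card + B.card = Fintype.card V := by
    rw [← Finset.card_union_of_disjoint hdisj, hunion, Finset.card_univ]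
  calc G.slowAux A.card A + G.slowAux B.card B
      ≤ G.slowAux (A.card + B.card) (A ∪ B) :=
        slowAux_superadd G B B.card A.card A hdisj
    _ = G.slowAux (Fintype.card V) Finset.univ := by rw [hAB, hunion]
end
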